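/- arXiv:math-ph/0401007 — 9 statements merged into one kernel-verified Lean document; each statement's English description precedes it below -/
import Mathlib

section
/- Let R be a ring containing elements b⁻, b⁺ with b⁻b⁺ − b⁺b⁻ = 1, and elements a⁻₁,…,a⁻ₙ, a⁺₁,…,a⁺ₙ satisfying the orthofermion relations of order n, such that b⁻ and b⁺ commute with every a⁻ᵢ and every a⁺ᵢ. Set Qᵢ := b⁺a⁻ᵢ, Qᵢ⁺ := b⁻a⁺ᵢ, and H := b⁺b⁻ + Σₖ a⁺ₖa⁻ₖ. Then for all i, j: QᵢQⱼ⁺ + δᵢⱼ Σₖ Qₖ⁺Qₖ = δᵢⱼ H. -/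
theorem stmt_3 {R : Type*} [Ring R] (n : ℕ) (bm bp : R) (am ap : Fin n → R)
    (hb : bm * bp - bp * bm = 1)
    (ho1 : ∀ i j, am i * am j = 0)
    (ho2 : ∀ i j, ap i * ap j = 0)
    (ho3 : ∀ i j, am i * ap j + (if i = j then ∑ k, ap k * am k else 0) =
      (if i = j then (1 : R) else 0))
    (hc1 : ∀ i, bm * am i = am i * bm) (hc2 : ∀ i, bm * ap i = ap i * bm)
    (hc3 : ∀ i, bp * am i = am i * bp) (hc4 : ∀ i, bp * ap i = ap i * bp) :
    ∀ i j, (bp * am i) * (bm * ap j) +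
        (if i = j then ∑ k, (bm * ap k) * (bp * am k) else 0) =
      (if i = j then bp * bm + ∑ k, ap k * am k else 0) := by
  intro i j
  have hbp : bm * bp = bp * bm + 1 := by
    rw [eq_add_of_sub_eq hb, add_comm]
  have key : (bp * am i) * (bm * ap j) = bp * bm * (am i * ap j) := by
    calc (bp * am i) * (bm * ap j) = bp * (am i * bm) * ap j := by noncomm_ring
    _ = bp * (bm * am i) * ap j := by rw [hc1]
    _ = bp * bm * (am i * ap j) := by noncomm_ring
  have key2 : ∀ k, (bm * ap k) * (bp * am k)
      = bp * bm * (ap k * am k) + ap k * am k := by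
    intro k
    calc (bm * ap k) * (bp * am k) = bm * (ap k * bp) * am k := by noncomm_ring
    _ = bm * (bp * ap k) * am k := by rw [hc4]
    _ = bm * bp * (ap k * am k) := by noncomm_ring
    _ = _ := by rw [hbp]; noncomm_ring
  rw [key]
  by_cases h : i = j
  · subst h
    simp only [if_pos rfl]
    have h3 := ho3 i i
    simp only [if_pos rfl] at h3
    have hai : am i * ap i = 1 - ∑ k, ap k * am k := eq_sub_of_add_eq h3
    simp only [key2, Finset.sum_add_distrib, ← Finset.mul_sum, hai]
    noncomm_ring
    simp
  · simp only [if_neg h]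
    have h3 := ho3 i j
    simp only [if_neg h, add_zero] at h3
    rw [h3, mul_zero, add_zero]
end

section
/- Let R be a ring and let a⁻₁,…,a⁻ₙ, a⁺₁,…,a⁺ₙ ∈ R satisfy the orthofermion relations of order n. Set Nᵢ := a⁺ᵢa⁻ᵢ. Then for all i, j: Nᵢa⁻ⱼ − a⁻ⱼNᵢ = −δᵢⱼ a⁻ⱼ and Nᵢa⁺ⱼ − a⁺ⱼNᵢ = δᵢⱼ a⁺ⱼ. In particular, for H := Σₖ Nₖ one has [H, a⁻ᵢ] = −a⁻ᵢ and [H, a⁺ᵢ] = a⁺ᵢ for every i. -/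
theorem stmt_5 {R : Type*} [Ring R] (n : ℕ) (am ap : Fin n → R)
    (ho1 : ∀ i j, am i * am j = 0)
    (ho2 : ∀ i j, ap i * ap j = 0)
    (ho3 : ∀ i j, am i * ap j + (if i = j then ∑ k, ap k * am k else 0) =
      (if i = j then (1 : R) else 0)) :
    (∀ i j, (ap i * am i) * am j - am j * (ap i * am i) =
        (if i = j then -am j else 0)) ∧
    (∀ i j, (ap i * am i) * ap j - ap j * (ap i * am i) =
        (if i = j then ap j else 0)) ∧
    (∀ i, (∑ k, ap k * am k) * am i - am i * (∑ k, ap k * am k) = -am i) ∧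
    (∀ i, (∑ k, ap k * am k) * ap i - ap i * (∑ k, ap k * am k) = ap i) := by
  set S : R := ∑ k, ap k * am k with hS
  have hmp : ∀ i j, am i * ap j = (if i = j then (1 : R) - S else 0) := by
    intro i j
    have := ho3 i j
    by_cases h : i = j
    · simp [h] at this ⊢
      linear_combination (norm := noncomm_ring) this
    · simpa [h] using this
  have hSm : ∀ i, S * am i = 0 := by
    intro i
    rw [hS, Finset.sum_mul]
    apply Finset.sum_eq_zero
    intro k _
    rw [mul_assoc, ho1, mul_zero]
  have hpS : ∀ i, ap i * S = 0 := by
    intro i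
    rw [hS, Finset.mul_sum]
    apply Finset.sum_eq_zero
    intro k _
    rw [← mul_assoc, ho2, zero_mul]
  have key1 : ∀ i j, (ap i * am i) * am j - am j * (ap i * am i) =
      (if i = j then -am j else 0) := by
    intro i j
    have h1 : (ap i * am i) * am j = 0 := by rw [mul_assoc, ho1, mul_zero]
    have h2 : am j * (ap i * am i) = (if i = j then am j else 0) := by
      rw [← mul_assoc, hmp j i]
      by_cases h : i = j
      · simp [h, sub_mul, hSm]
      · simp [h, Ne.symm h]
    rw [h1, h2]
    by_cases h : i = j <;> simp [h]
  have key2 : ∀ i j, (ap i * am i) * ap j - ap j * (ap i * am i) =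
      (if i = j then ap j else 0) := by
    intro i j
    have h1 : (ap i * am i) * ap j = (if i = j then ap i else 0) := by
      rw [mul_assoc, hmp i j]
      by_cases h : i = j
      · simp [h, mul_sub, hpS]
      · simp [h]
    have h2 : ap j * (ap i * am i) = 0 := by rw [← mul_assoc, ho2, zero_mul]
    rw [h1, h2]
    by_cases h : i = j <;> simp [h]
  refine ⟨key1, key2, ?_, ?_⟩
  · intro i
    rw [Finset.sum_mul, Finset.mul_sum, ← Finset.sum_sub_distrib]
    rw [Finset.sum_congr rfl (fun k _ => key1 k i)]
    simp
  · intro i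
    rw [Finset.sum_mul, Finset.mul_sum, ← Finset.sum_sub_distrib]
    rw [Finset.sum_congr rfl (fun k _ => key2 k i)]
    simp
end

section
/- In the matrix algebra M_{n+1}(ℂ) with rows and columns indexed by {0,1,…,n}, let Eᵢⱼ denote the matrix units, and set a⁺ᵢ := Eᵢ₀ and a⁻ᵢ := E₀ᵢ for 1 ≤ i ≤ n. Then these elements satisfy the orthofermion relations of order n: a⁻ᵢa⁻ⱼ = 0 and a⁺ᵢa⁺ⱼ = 0 for all i, j, and a⁻ᵢa⁺ⱼ + δᵢⱼ Σₖ a⁺ₖa⁻ₖ = δᵢⱼ·1. Moreover the unital subalgebra of M_{n+1}(ℂ) generated by {a⁻ᵢ, a⁺ᵢ : 1 ≤ i ≤ n} is all of M_{n+1}(ℂ). -/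
open Matrix

def IsOrthofermionFamily {ι A : Type*} [Fintype ι] [DecidableEq ι] [Semiring A]
    (am ap : ι → A) : Prop :=
  (∀ i j, am i * am j = 0) ∧ (∀ i j, ap i * ap j = 0) ∧
    ∀ i j, am i * ap j + (if i = j then ∑ k, ap k * am k else 0) = if i = j then 1 else 0

namespace Matrix

variable {n : ℕ}

theorem single_zero_zero_add_sum_single_succ_succ {α : Type*} [Semiring α] :
    single 0 0 (1 : α) + ∑ k : Fin n, single k.succ k.succ 1 = 1 := by
  rw [← Fin.sum_univ_succ (f := fun i => single i i (1 : α)), sum_single_one]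

theorem isOrthofermionFamily_single {α : Type*} [Semiring α] :
    IsOrthofermionFamily (fun i : Fin n => single (0 : Fin (n + 1)) i.succ (1 : α))
      (fun i => single i.succ 0 1) := by
  refine ⟨fun i j => single_mul_single_of_ne _ _ _ _ (Fin.succ_ne_zero i) _,
    fun i j => single_mul_single_of_ne _ _ _ _ (Fin.succ_ne_zero j).symm _, fun i j => ?_⟩
  split_ifs with hij
  · subst hij
    simp only [single_mul_single_same, mul_one]
    exact single_zero_zero_add_sum_single_succ_succ
  · rw [add_zero]
    exact single_mul_single_of_ne _ _ _ _ ((Fin.succ_injective n).ne hij) _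

theorem subalgebra_eq_top_of_single_one_mem {m R : Type*} [Fintype m] [DecidableEq m]
    [CommSemiring R] (S : Subalgebra R (Matrix m m R)) (h : ∀ i j, single i j (1 : R) ∈ S) :
    S = ⊤ :=
  eq_top_iff.2 fun M _ => M.induction_on' S.zero_mem (fun _ _ => S.add_mem) fun i j x => by
    simpa [smul_single] using S.smul_mem (h i j) x

/-- Every matrix unit off the first row and column is `E i 0 * E 0 j`, and `E 0 0` is `1` minus the
other diagonal units. -/
theorem subalgebra_eq_top_of_single_zero_succ_mem {R : Type*} [CommRing R]
    (S : Subalgebra R (Matrix (Fin (n + 1)) (Fin (n + 1)) R))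
    (hrow : ∀ j : Fin n, single 0 j.succ (1 : R) ∈ S)
    (hcol : ∀ i : Fin n, single i.succ 0 (1 : R) ∈ S) : S = ⊤ := by
  have hsucc (i j : Fin n) : single i.succ j.succ (1 : R) ∈ S := by
    simpa using S.mul_mem (hcol i) (hrow j)
  have hzero : single 0 0 (1 : R) ∈ S := by
    rw [eq_sub_of_add_eq (single_zero_zero_add_sum_single_succ_succ (n := n) (α := R))]
    exact S.sub_mem S.one_mem (S.sum_mem fun k _ => hsucc k k)
  refine subalgebra_eq_top_of_single_one_mem S fun i j => ?_
  cases i using Fin.cases <;> cases j using Fin.cases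
  exacts [hzero, hrow _, hcol _, hsucc _ _]

end Matrix

theorem stmt_7 (n : ℕ) :
    let ap : Fin n → Matrix (Fin (n + 1)) (Fin (n + 1)) ℂ :=
      fun i => Matrix.single i.succ 0 1
    let am : Fin n → Matrix (Fin (n + 1)) (Fin (n + 1)) ℂ :=
      fun i => Matrix.single 0 i.succ 1
    (∀ i j, am i * am j = 0) ∧
    (∀ i j, ap i * ap j = 0) ∧
    (∀ i j, am i * ap j + (if i = j then ∑ k, ap k * am k else 0) =
      (if i = j then 1 else 0)) ∧
    Algebra.adjoin ℂ (Set.range am ∪ Set.range ap) = ⊤ := by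
  intro ap am
  obtain ⟨hamam, hapap, hamap⟩ : IsOrthofermionFamily am ap := isOrthofermionFamily_single
  refine ⟨hamam, hapap, hamap, subalgebra_eq_top_of_single_zero_succ_mem _ ?_ ?_⟩
  · exact fun j => Algebra.subset_adjoin (Or.inl ⟨j, rfl⟩)
  · exact fun i => Algebra.subset_adjoin (Or.inr ⟨i, rfl⟩)
end

section
/- Let R be a ring and let a⁻₁,…,a⁻ₙ, a⁺₁,…,a⁺ₙ ∈ R satisfy the pseudo-fermion relations of order n. Set F⁻ := Σᵢ a⁻ᵢ and F⁺ := Σᵢ a⁺ᵢ. Then Green's equations hold: [[F⁺, F⁻], F⁻] = −2F⁻ and [[F⁺, F⁻], F⁺] = 2F⁺. -/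
/-!
Commutators of elements indexed by different modes commute, so the bracket of two Green ansätze
splits into a sum of single-mode brackets. For one mode, `a * a = 0` and `a * b + b * a = 1`
give `a * b * a = a`, whence `⁅⁅b, a⁆, a⁆ = -2 a`; the relation for `F⁺` is the same identity
with the two operators exchanged.
-/

open Finset

section

attribute [local instance] LieRing.ofAssociativeRing

variable {R : Type*} [Ring R]

theorem Commute.lie_left {a b c : R} (hac : Commute a c) (hbc : Commute b c) :
    Commute ⁅a, b⁆ c := by
  rw [Ring.lie_def]
  exact (hac.mul_left hbc).sub_left (hbc.mul_left hac)

theorem Finset.sum_lie_sum_of_commute {ι : Type*} (s : Finset ι) (x y : ι → R)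
    (h : ∀ i ∈ s, ∀ j ∈ s, i ≠ j → Commute (x i) (y j)) :
    ⁅∑ i ∈ s, x i, ∑ j ∈ s, y j⁆ = ∑ i ∈ s, ⁅x i, y i⁆ := by
  rw [sum_lie_sum]
  refine sum_congr rfl fun i hi => sum_eq_single_of_mem i hi fun j hj hji => ?_
  exact (h i hi j hj hji.symm).lie_eq

theorem mul_mul_eq_self_of_mul_add_mul_eq_one {a b : R} (ha : a * a = 0)
    (hab : a * b + b * a = 1) : a * b * a = a := by
  calc a * b * a = a * (a * b + b * a) - a * a * b := by noncomm_ring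
    _ = a := by rw [hab, ha]; noncomm_ring

theorem lie_lie_eq_neg_two_mul_of_mul_add_mul_eq_one {a b : R} (ha : a * a = 0)
    (hab : a * b + b * a = 1) : ⁅⁅b, a⁆, a⁆ = -(2 * a) := by
  calc ⁅⁅b, a⁆, a⁆ = b * (a * a) - 2 * (a * b * a) + a * a * b := by
        simp only [Ring.lie_def]; noncomm_ring
    _ = -(2 * a) := by
        rw [mul_mul_eq_self_of_mul_add_mul_eq_one ha hab, ha]; noncomm_ring

theorem lie_lie_eq_two_mul_of_mul_add_mul_eq_one {a b : R} (hb : b * b = 0)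
    (hab : a * b + b * a = 1) : ⁅⁅b, a⁆, b⁆ = 2 * b := by
  rw [← lie_skew b a, neg_lie,
    lie_lie_eq_neg_two_mul_of_mul_add_mul_eq_one hb ((add_comm _ _).trans hab), neg_neg]

end

theorem stmt_10 {R : Type*} [Ring R] (n : ℕ) (am ap : Fin n → R)
    (hsq1 : ∀ i, am i * am i = 0) (hsq2 : ∀ i, ap i * ap i = 0)
    (hc1 : ∀ i j, i ≠ j → am i * am j = am j * am i)
    (hc2 : ∀ i j, i ≠ j → ap i * ap j = ap j * ap i)
    (hc3 : ∀ i j, i ≠ j → am i * ap j = ap j * am i)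
    (hacr : ∀ i, am i * ap i + ap i * am i = 1) :
    let Fm := ∑ i, am i
    let Fp := ∑ i, ap i
    (Fp * Fm - Fm * Fp) * Fm - Fm * (Fp * Fm - Fm * Fp) = -(2 * Fm) ∧
    (Fp * Fm - Fm * Fp) * Fp - Fp * (Fp * Fm - Fm * Fp) = 2 * Fp := by
  intro Fm Fp
  simp only [← Ring.lie_def]
  have hpm : ∀ i j, i ≠ j → Commute (ap i) (am j) := fun i j hij => (hc3 j i hij.symm).symm
  have hF : ⁅Fp, Fm⁆ = ∑ i, ⁅ap i, am i⁆ :=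
    sum_lie_sum_of_commute _ _ _ fun i _ j _ hij => hpm i j hij
  rw [hF, sum_lie_sum_of_commute _ _ _ fun i _ j _ hij => (hpm i j hij).lie_left (hc1 i j hij),
    sum_lie_sum_of_commute _ _ _ fun i _ j _ hij => Commute.lie_left (hc2 i j hij) (hc3 i j hij)]
  constructor
  · simp only [lie_lie_eq_neg_two_mul_of_mul_add_mul_eq_one (hsq1 _) (hacr _), sum_neg_distrib,
      ← mul_sum]
    rfl
  · simp only [lie_lie_eq_two_mul_of_mul_add_mul_eq_one (hsq2 _) (hacr _), ← mul_sum]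
    rfl
end

section
/- Let R be a ring, let a⁻₁,…,a⁻ₙ, a⁺₁,…,a⁺ₙ ∈ R, and let N₁,…,Nₙ ∈ R satisfy the number operator relations [Nᵢ, a⁻ⱼ] = −δᵢⱼ a⁻ⱼ and [Nᵢ, a⁺ⱼ] = δᵢⱼ a⁺ⱼ for all i, j. Then for all i, j, the commutator [Nᵢ, Nⱼ] commutes with every element of the unital subring of R generated by a⁻₁,…,a⁻ₙ, a⁺₁,…,a⁺ₙ. -/
lemma noa_key {R : Type*} [Ring R] (Ni Nj a : R) (ci cj : R)
    (hic : ∀ x : R, ci * x = x * ci) (hjc : ∀ x : R, cj * x = x * cj)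
    (hi : Ni * a - a * Ni = ci * a) (hj : Nj * a - a * Nj = cj * a) :
    (Ni * Nj - Nj * Ni) * a = a * (Ni * Nj - Nj * Ni) := by
  have hi' : Ni * a = a * Ni + ci * a := by rw [← hi]; noncomm_ring
  have hj' : Nj * a = a * Nj + cj * a := by rw [← hj]; noncomm_ring
  have e1 : Ni * Nj * a = a * (Ni * Nj) + ci * a * Nj + cj * a * Ni + cj * (ci * a) := by
    rw [mul_assoc, hj', mul_add, ← mul_assoc, hi', ← mul_assoc Ni cj a, ← hjc Ni, mul_assoc cj Ni a, hi']
    noncomm_ring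
  have e2 : Nj * Ni * a = a * (Nj * Ni) + cj * a * Ni + ci * a * Nj + ci * (cj * a) := by
    rw [mul_assoc, hi', mul_add, ← mul_assoc, hj', ← mul_assoc Nj ci a, ← hic Nj, mul_assoc ci Nj a, hj']
    noncomm_ring
  have hcc : cj * (ci * a) = ci * (cj * a) := by
    rw [← mul_assoc, hjc ci, mul_assoc]
  rw [sub_mul, e1, e2, hcc]
  noncomm_ring

theorem stmt_13 {R : Type*} [Ring R] (n : ℕ) (am ap N : Fin n → R)
    (hN1 : ∀ i j, N i * am j - am j * N i = (if i = j then -am j else 0))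
    (hN2 : ∀ i j, N i * ap j - ap j * N i = (if i = j then ap j else 0)) :
    ∀ i j, ∀ x ∈ Subring.closure (Set.range am ∪ Set.range ap),
      (N i * N j - N j * N i) * x = x * (N i * N j - N j * N i) := by
  intro i j
  have hle : Subring.closure (Set.range am ∪ Set.range ap) ≤
      Subring.centralizer {N i * N j - N j * N i} := by
    rw [Subring.closure_le]
    rintro a (⟨k, rfl⟩ | ⟨k, rfl⟩) <;>
      simp only [SetLike.mem_coe, Subring.mem_centralizer_iff] <;>
      intro g hg <;> rw [Set.mem_singleton_iff] at hg <;> subst hg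
    · refine noa_key _ _ _ (if i = k then (-1 : R) else 0) (if j = k then (-1 : R) else 0)
        ?_ ?_ ?_ ?_
      · intro x; split <;> simp
      · intro x; split <;> simp
      · rw [hN1 i k]; split <;> simp
      · rw [hN1 j k]; split <;> simp
    · refine noa_key _ _ _ (if i = k then (1 : R) else 0) (if j = k then (1 : R) else 0)
        ?_ ?_ ?_ ?_
      · intro x; split <;> simp
      · intro x; split <;> simp
      · rw [hN2 i k]; split <;> simp
      · rw [hN2 j k]; split <;> simp
  intro x hx
  exact (Subring.mem_centralizer_iff.mp (hle hx) _ rfl)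
end

section
/- Let A be an associative algebra over a field K, let β ∈ K with β ≠ 0, and let a⁻₁, a⁻₂, a⁺₁, a⁺₂ ∈ A satisfy the quasi-orthofermion relations of parameter β. Then: (i) a⁻₂a⁺₁a⁻₁ = a⁻₁a⁺₁a⁻₂ + (β⁻¹ − 1) a⁻₂, and (ii) a⁻₁a⁺₂a⁻₂ = −a⁻₁a⁺₁a⁻₁ + β⁻¹ a⁻₁. -/
theorem stmt_15 {K A : Type*} [Field K] [Ring A] [Algebra K A]
    (β : K) (hβ : β ≠ 0) (a1m a2m a1p a2p : A)
    (hm11 : a1m * a1m = 0) (hm12 : a1m * a2m = 0)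
    (hm21 : a2m * a1m = 0) (hm22 : a2m * a2m = 0)
    (hp11 : a1p * a1p = 0) (hp12 : a1p * a2p = 0)
    (hp21 : a2p * a1p = 0) (hp22 : a2p * a2p = 0)
    (hrel : a1m * a1p + a2m * a2p + β • (a1p * a1m) + β • (a2p * a2m) = 1) :
    a2m * a1p * a1m = a1m * a1p * a2m + (β⁻¹ - 1) • a2m ∧
    a1m * a2p * a2m = -(a1m * a1p * a1m) + β⁻¹ • a1m := by
  have h1 := congrArg (fun x => a2m * x) hrel
  simp only [mul_add, mul_one, mul_smul_comm, ← mul_assoc, hm21, hm22,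
    zero_mul, zero_add, smul_zero] at h1
  have h2 := congrArg (fun x => x * a2m) hrel
  simp only [add_mul, one_mul, smul_mul_assoc, mul_assoc, hm12, hm22,
    mul_zero, add_zero, smul_zero, zero_add] at h2
  have h3 := congrArg (fun x => a1m * x) hrel
  simp only [mul_add, mul_one, mul_smul_comm, ← mul_assoc, hm11, hm12,
    zero_mul, zero_add, smul_zero] at h3
  have h1' : a2m * a1p * a1m + a2m * a2p * a2m = β⁻¹ • a2m := by
    have := congrArg (fun x => β⁻¹ • x) h1
    simpa [smul_add, smul_smul, inv_mul_cancel₀ hβ] using this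
  have h3' : a1m * a1p * a1m + a1m * a2p * a2m = β⁻¹ • a1m := by
    have := congrArg (fun x => β⁻¹ • x) h3
    simpa [smul_add, smul_smul, inv_mul_cancel₀ hβ] using this
  have h2' : a1m * a1p * a2m = a2m - a2m * a2p * a2m := by
    rw [mul_assoc, eq_sub_iff_add_eq, mul_assoc]
    exact h2
  constructor
  · rw [sub_smul, one_smul, ← h1', h2']
    abel
  · rw [← h3']
    abel
end

section
/- Let A be an associative algebra over a field K, let β ∈ K with β ≠ 0 and β ≠ 1, and let a⁻₁, a⁻₂, a⁺₁, a⁺₂ ∈ A satisfy the quasi-orthofermion relations of parameter β. Define N₁ := (β/(β−1))(a⁻₁a⁺₁ + β a⁺₁a⁻₁) + β a⁺₂a⁻₂ and N₂ := −(β/(β−1))(a⁻₁a⁺₁ + a⁺₁a⁻₁). Then N₁ and N₂ are number operators: for all i, j ∈ {1,2}, [Nᵢ, a⁻ⱼ] = −δᵢⱼ a⁻ⱼ and [Nᵢ, a⁺ⱼ] = δᵢⱼ a⁺ⱼ. -/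
theorem stmt_17 {K A : Type*} [Field K] [Ring A] [Algebra K A]
    (β : K) (hβ0 : β ≠ 0) (hβ1 : β ≠ 1) (a1m a2m a1p a2p : A)
    (hm11 : a1m * a1m = 0) (hm12 : a1m * a2m = 0)
    (hm21 : a2m * a1m = 0) (hm22 : a2m * a2m = 0)
    (hp11 : a1p * a1p = 0) (hp12 : a1p * a2p = 0)
    (hp21 : a2p * a1p = 0) (hp22 : a2p * a2p = 0)
    (hrel : a1m * a1p + a2m * a2p + β • (a1p * a1m) + β • (a2p * a2m) = 1) :
    let N1 : A := (β / (β - 1)) • (a1m * a1p + β • (a1p * a1m)) + β • (a2p * a2m)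
    let N2 : A := -((β / (β - 1)) • (a1m * a1p + a1p * a1m))
    N1 * a1m - a1m * N1 = -a1m ∧ N1 * a2m - a2m * N1 = 0 ∧
    N1 * a1p - a1p * N1 = a1p ∧ N1 * a2p - a2p * N1 = 0 ∧
    N2 * a1m - a1m * N2 = 0 ∧ N2 * a2m - a2m * N2 = -a2m ∧
    N2 * a1p - a1p * N2 = 0 ∧ N2 * a2p - a2p * N2 = a2p := by
  intro N1 N2
  have hb1 : β - 1 ≠ 0 := sub_ne_zero.mpr hβ1
  have z : ∀ x y : A, x * y = 0 → ∀ b : A, x * (y * b) = 0 :=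
    fun x y h b => by rw [← mul_assoc, h, zero_mul]
  have h1 := congrArg (fun t => a1m * t) hrel
  have h2 := congrArg (fun t => t * a1m) hrel
  have h3 := congrArg (fun t => a2m * t) hrel
  have h4 := congrArg (fun t => t * a2m) hrel
  have h5 := congrArg (fun t => a1p * t) hrel
  have h6 := congrArg (fun t => t * a1p) hrel
  have h7 := congrArg (fun t => a2p * t) hrel
  have h8 := congrArg (fun t => t * a2p) hrel
  simp only [mul_add, add_mul, mul_smul_comm, smul_mul_assoc, mul_one, one_mul, mul_assoc,
    z _ _ hm11, z _ _ hm12, z _ _ hm21, z _ _ hm22,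
    z _ _ hp11, z _ _ hp12, z _ _ hp21, z _ _ hp22,
    hm11, hm12, hm21, hm22, hp11, hp12, hp21, hp22,
    mul_zero, zero_mul, smul_zero, add_zero, zero_add] at h1 h2 h3 h4 h5 h6 h7 h8
  unfold N1 N2
  refine ⟨?_, ?_, ?_, ?_, ?_, ?_, ?_, ?_⟩ <;>
    simp only [mul_add, add_mul, smul_add, neg_mul, mul_neg, neg_neg, smul_neg,
      mul_smul_comm, smul_mul_assoc, smul_smul, mul_one, one_mul, mul_assoc,
      z _ _ hm11, z _ _ hm12, z _ _ hm21, z _ _ hm22,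
      z _ _ hp11, z _ _ hp12, z _ _ hp21, z _ _ hp22,
      hm11, hm12, hm21, hm22, hp11, hp12, hp21, hp22,
      mul_zero, zero_mul, smul_zero, add_zero, zero_add, neg_zero]
  · linear_combination (norm := (match_scalars <;> (field_simp; try ring))) (-1 : K) • h1
  · linear_combination (norm := (match_scalars <;> (field_simp; try ring)))
      (β / (β - 1)) • h4 - (β / (β - 1)) • h3
  · linear_combination (norm := (match_scalars <;> (field_simp; try ring))) h6
  · linear_combination (norm := (match_scalars <;> (field_simp; try ring)))
      (β / (β - 1)) • h8 - (β / (β - 1)) • h7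
  · module
  · linear_combination (norm := (match_scalars <;> (field_simp; try ring)))
      (1 / (β - 1)) • h3 - (β / (β - 1)) • h4
  · module
  · linear_combination (norm := (match_scalars <;> (field_simp; try ring)))
      (β / (β - 1)) • h7 - (1 / (β - 1)) • h8
end

section
/- Let A be an associative algebra over a field K, let β ∈ K with β ≠ 0 and β ≠ 1, and let a⁻₁, a⁻₂, a⁺₁, a⁺₂ ∈ A satisfy the quasi-orthofermion relations of parameter β. Define N₁ := (β/(β−1))(a⁻₁a⁺₁ + β a⁺₁a⁻₁) + β a⁺₂a⁻₂, N₂ := −(β/(β−1))(a⁻₁a⁺₁ + a⁺₁a⁻₁), and H := β(a⁺₁a⁻₁ + a⁺₂a⁻₂). Then H = N₁ + N₂, and for i ∈ {1,2}: [H, a⁻ᵢ] = −a⁻ᵢ and [H, a⁺ᵢ] = a⁺ᵢ. -/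
theorem stmt_18 {K A : Type*} [Field K] [Ring A] [Algebra K A]
    (β : K) (hβ0 : β ≠ 0) (hβ1 : β ≠ 1) (a1m a2m a1p a2p : A)
    (hm11 : a1m * a1m = 0) (hm12 : a1m * a2m = 0)
    (hm21 : a2m * a1m = 0) (hm22 : a2m * a2m = 0)
    (hp11 : a1p * a1p = 0) (hp12 : a1p * a2p = 0)
    (hp21 : a2p * a1p = 0) (hp22 : a2p * a2p = 0)
    (hrel : a1m * a1p + a2m * a2p + β • (a1p * a1m) + β • (a2p * a2m) = 1) :
    let N1 : A := (β / (β - 1)) • (a1m * a1p + β • (a1p * a1m)) + β • (a2p * a2m)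
    let N2 : A := -((β / (β - 1)) • (a1m * a1p + a1p * a1m))
    let H : A := β • (a1p * a1m + a2p * a2m)
    H = N1 + N2 ∧
    H * a1m - a1m * H = -a1m ∧ H * a2m - a2m * H = -a2m ∧
    H * a1p - a1p * H = a1p ∧ H * a2p - a2p * H = a2p := by
  intro N1 N2 H
  have h1 : β - 1 ≠ 0 := sub_ne_zero.mpr hβ1
  have hH : H = β • (a1p * a1m + a2p * a2m) := rfl
  refine ⟨?_, ?_, ?_, ?_, ?_⟩
  · show β • (a1p * a1m + a2p * a2m) =
      (β / (β - 1)) • (a1m * a1p + β • (a1p * a1m)) + β • (a2p * a2m) +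
      -((β / (β - 1)) • (a1m * a1p + a1p * a1m))
    match_scalars <;> field_simp <;> ring
  all_goals {
    rw [hH]
    have hL1 := congrArg (fun x => a1m * x) hrel
    have hL2 := congrArg (fun x => a2m * x) hrel
    have hR1 := congrArg (fun x => x * a1p) hrel
    have hR2 := congrArg (fun x => x * a2p) hrel
    simp only [mul_add, add_mul, mul_one, one_mul, mul_smul_comm, smul_mul_assoc,
      ← mul_assoc, hm11, hm12, hm21, hm22, hp11, hp12, hp21, hp22,
      zero_mul, mul_zero, smul_zero, zero_add, add_zero] at hL1 hL2 hR1 hR2 ⊢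
    simp only [mul_assoc, hm11, hm12, hm21, hm22, hp11, hp12, hp21, hp22,
      mul_zero, smul_zero, zero_add, add_zero, zero_sub, sub_zero, smul_add] at hL1 hL2 hR1 hR2 ⊢
    first
    | linear_combination (norm := module) -hL1
    | linear_combination (norm := module) -hL2
    | linear_combination (norm := module) hR1
    | linear_combination (norm := module) hR2 }
end

section
/- Let A be an associative algebra over a field K, let β ∈ K with β ≠ 0, let b⁻, b⁺ ∈ A satisfy b⁻b⁺ − b⁺b⁻ = 1, and let a⁻₁, a⁻₂, a⁺₁, a⁺₂ ∈ A satisfy the quasi-orthofermion relations of parameter β, with b⁻ and b⁺ commuting with every a±ᵢ. Set Qᵢ := b⁺a⁻ᵢ, Qᵢ⁺ := b⁻a⁺ᵢ, and H := b⁺b⁻ + β(a⁺₁a⁻₁ + a⁺₂a⁻₂). Then: (i) QᵢQⱼ = 0 and Qᵢ⁺Qⱼ⁺ = 0 for all i, j ∈ {1,2}; (ii) Q₁Q₁⁺ + Q₂Q₂⁺ + β(Q₁⁺Q₁ + Q₂⁺Q₂) = H; and (iii) [H, Qᵢ] = 0 and [H, Qᵢ⁺] = 0 for i ∈ {1,2}.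 -/
theorem stmt_19 {K A : Type*} [Field K] [Ring A] [Algebra K A]
    (β : K) (hβ0 : β ≠ 0) (bm bp a1m a2m a1p a2p : A)
    (hb : bm * bp - bp * bm = 1)
    (hm11 : a1m * a1m = 0) (hm12 : a1m * a2m = 0)
    (hm21 : a2m * a1m = 0) (hm22 : a2m * a2m = 0)
    (hp11 : a1p * a1p = 0) (hp12 : a1p * a2p = 0)
    (hp21 : a2p * a1p = 0) (hp22 : a2p * a2p = 0)
    (hrel : a1m * a1p + a2m * a2p + β • (a1p * a1m) + β • (a2p * a2m) = 1)
    (hc1 : bm * a1m = a1m * bm) (hc2 : bm * a2m = a2m * bm)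
    (hc3 : bm * a1p = a1p * bm) (hc4 : bm * a2p = a2p * bm)
    (hc5 : bp * a1m = a1m * bp) (hc6 : bp * a2m = a2m * bp)
    (hc7 : bp * a1p = a1p * bp) (hc8 : bp * a2p = a2p * bp) :
    let Q1 : A := bp * a1m
    let Q2 : A := bp * a2m
    let Q1p : A := bm * a1p
    let Q2p : A := bm * a2p
    let H : A := bp * bm + β • (a1p * a1m + a2p * a2m)
    (Q1 * Q1 = 0 ∧ Q1 * Q2 = 0 ∧ Q2 * Q1 = 0 ∧ Q2 * Q2 = 0 ∧
      Q1p * Q1p = 0 ∧ Q1p * Q2p = 0 ∧ Q2p * Q1p = 0 ∧ Q2p * Q2p = 0) ∧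
    Q1 * Q1p + Q2 * Q2p + β • (Q1p * Q1 + Q2p * Q2) = H ∧
    (H * Q1 - Q1 * H = 0 ∧ H * Q2 - Q2 * H = 0 ∧
      H * Q1p - Q1p * H = 0 ∧ H * Q2p - Q2p * H = 0) := by
  intro Q1 Q2 Q1p Q2p H
  have c1 : ∀ x : A, a1m * (bm * x) = bm * (a1m * x) := fun x => by
    rw [← mul_assoc, ← hc1, mul_assoc]
  have c2 : ∀ x : A, a2m * (bm * x) = bm * (a2m * x) := fun x => by
    rw [← mul_assoc, ← hc2, mul_assoc]
  have c3 : ∀ x : A, a1p * (bm * x) = bm * (a1p * x) := fun x => by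
    rw [← mul_assoc, ← hc3, mul_assoc]
  have c4 : ∀ x : A, a2p * (bm * x) = bm * (a2p * x) := fun x => by
    rw [← mul_assoc, ← hc4, mul_assoc]
  have c5 : ∀ x : A, a1m * (bp * x) = bp * (a1m * x) := fun x => by
    rw [← mul_assoc, ← hc5, mul_assoc]
  have c6 : ∀ x : A, a2m * (bp * x) = bp * (a2m * x) := fun x => by
    rw [← mul_assoc, ← hc6, mul_assoc]
  have c7 : ∀ x : A, a1p * (bp * x) = bp * (a1p * x) := fun x => by
    rw [← mul_assoc, ← hc7, mul_assoc]
  have c8 : ∀ x : A, a2p * (bp * x) = bp * (a2p * x) := fun x => by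
    rw [← mul_assoc, ← hc8, mul_assoc]
  have hb1 : ∀ x : A, bm * (bp * x) = bp * (bm * x) + x := fun x => by
    rw [← mul_assoc, ← mul_assoc, sub_eq_iff_eq_add.mp hb, add_mul, one_mul, add_comm]
  have n1 : ∀ x : A, a1m * (a1m * x) = 0 := fun x => by rw [← mul_assoc, hm11, zero_mul]
  have n2 : ∀ x : A, a1m * (a2m * x) = 0 := fun x => by rw [← mul_assoc, hm12, zero_mul]
  have n3 : ∀ x : A, a2m * (a1m * x) = 0 := fun x => by rw [← mul_assoc, hm21, zero_mul]
  have n4 : ∀ x : A, a2m * (a2m * x) = 0 := fun x => by rw [← mul_assoc, hm22, zero_mul]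
  have n5 : ∀ x : A, a1p * (a1p * x) = 0 := fun x => by rw [← mul_assoc, hp11, zero_mul]
  have n6 : ∀ x : A, a1p * (a2p * x) = 0 := fun x => by rw [← mul_assoc, hp12, zero_mul]
  have n7 : ∀ x : A, a2p * (a1p * x) = 0 := fun x => by rw [← mul_assoc, hp21, zero_mul]
  have n8 : ∀ x : A, a2p * (a2p * x) = 0 := fun x => by rw [← mul_assoc, hp22, zero_mul]
  have key0 : bp * (bm * (a1m * a1p)) + bp * (bm * (a2m * a2p)) +
      β • (bp * (bm * (a1p * a1m))) + β • (bp * (bm * (a2p * a2m))) = bp * bm := by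
    have h := congrArg (fun x => bp * (bm * x)) hrel
    simpa [mul_add, mul_smul_comm, mul_one] using h
  have kA1 : β • (bp * (a1m * (a1p * a1m))) + β • (bp * (a1m * (a2p * a2m))) = bp * a1m := by
    have h := congrArg (fun x => bp * (a1m * x)) hrel
    simpa [mul_add, mul_smul_comm, mul_one, n1, n2, mul_zero] using h
  have kA2 : β • (bp * (a2m * (a1p * a1m))) + β • (bp * (a2m * (a2p * a2m))) = bp * a2m := by
    have h := congrArg (fun x => bp * (a2m * x)) hrel
    simpa [mul_add, mul_smul_comm, mul_one, n3, n4, mul_zero] using h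
  have kB1 : β • (bm * (a1p * (a1m * a1p))) + β • (bm * (a2p * (a2m * a1p))) = bm * a1p := by
    have h := congrArg (fun x => bm * (x * a1p)) hrel
    simpa [add_mul, smul_mul_assoc, mul_assoc, one_mul, mul_add, hp11, hp21,
      mul_zero, zero_mul] using h
  have kB2 : β • (bm * (a1p * (a1m * a2p))) + β • (bm * (a2p * (a2m * a2p))) = bm * a2p := by
    have h := congrArg (fun x => bm * (x * a2p)) hrel
    simpa [add_mul, smul_mul_assoc, mul_assoc, one_mul, mul_add, hp12, hp22,
      mul_zero, zero_mul] using h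
  refine ⟨⟨?_, ?_, ?_, ?_, ?_, ?_, ?_, ?_⟩, ?_, ?_, ?_, ?_, ?_⟩ <;>
    simp only [Q1, Q2, Q1p, Q2p, H, mul_assoc, mul_add, add_mul, mul_smul_comm,
      smul_mul_assoc, smul_add, mul_one, one_mul, c1, c2, c3, c4, c5, c6, c7, c8,
      hb1, hc1.symm, hc2.symm, hc3.symm, hc4.symm, hc5.symm, hc6.symm, hc7.symm, hc8.symm, hm11, hm12, hm21, hm22,
      hp11, hp12, hp21, hp22, n1, n2, n3, n4, n5, n6, n7, n8, mul_zero, zero_mul,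
      smul_zero, add_zero, zero_add, sub_eq_zero]
  · rw [← key0]; abel
  · rw [kA1]
  · rw [kA2]
  · rw [kB1]
  · rw [kB2]
end
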